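/- arXiv:2108.04400 — 2 statements merged into one kernel-verified Lean document; each statement's English description precedes it below -/
import Mathlib

section
/- Let ⟨A_i : i < ω₁⟩ be a sequence of stationary subsets of ω₁ and let t : ω₁ → ω₁ be any function. Then for any ordinals β < ω₁ and 0 < α < ω₁, there exists a normal (i.e., strictly increasing and continuous) function f : α → ω₁ such that f(0) > β and for all ξ < α, f(ξ) ∈ A_{t(ξ)}. -/
noncomputable section
open Set Ordinal Cardinal

/-- The first uncountable ordinal. -/
def omega1 : Ordinal := (Cardinal.aleph 1).ord

/-- `C` is a club (closed unbounded) subset of the ordinal `ρ`. -/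
def IsClubIn (C : Set Ordinal) (ρ : Ordinal) : Prop :=
  C ⊆ Set.Iio ρ ∧
  (∀ α, α < ρ → 0 < α → (∀ β < α, ∃ γ ∈ C, β < γ ∧ γ < α) → α ∈ C) ∧
  (∀ α, α < ρ → ∃ β ∈ C, α < β)

/-- `A` is stationary in the ordinal `ρ`: it meets every club in `ρ`. -/
def IsStatIn (A : Set Ordinal) (ρ : Ordinal) : Prop :=
  ∀ C, IsClubIn C ρ → (A ∩ C).Nonempty

/-- A function is normal on `Iio α`: strictly increasing and continuous at limits. -/
def IsNormalOn (f : Ordinal → Ordinal) (α : Ordinal) : Prop :=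
  (∀ ξ η, ξ < η → η < α → f ξ < f η) ∧
  (∀ l, l < α → Order.IsSuccLimit l → f l = sSup (f '' Set.Iio l))

universe u v w

open Set Ordinal Cardinal


lemma omega1_isLimit : Order.IsSuccLimit omega1 := Cardinal.isSuccLimit_ord (aleph0_le_aleph 1)

lemma card_le_aleph0 {γ : Ordinal} (h : γ < omega1) : γ.card ≤ ℵ₀ := by
  rw [omega1, Cardinal.lt_ord] at h
  rwa [← Cardinal.succ_aleph0, Order.lt_succ_iff] at h

lemma exists_seq {γ : Ordinal} (h0 : 0 < γ) (hγ : γ < omega1) :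
    ∃ s : ℕ → Ordinal, Set.Iio γ = Set.range s := by
  have hc : (Set.Iio γ).Countable := by
    rw [← Set.countable_coe_iff, ← Cardinal.mk_le_aleph0_iff, Ordinal.mk_Iio_ordinal]
    exact (Cardinal.lift_le.2 (card_le_aleph0 hγ)).trans (le_of_eq Cardinal.lift_aleph0)
  exact hc.exists_eq_range ⟨0, h0⟩

lemma iSup_lt_omega1 (f : ℕ → Ordinal) (h : ∀ n, f n < omega1) : iSup f < omega1 :=
  by rw [omega1, Cardinal.ord_aleph] at h ⊢; exact Ordinal.iSup_lt_omega_one h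

lemma sSup_image_lt {f : Ordinal.{u} → Ordinal.{v}} {γ : Ordinal.{u}} (h0 : 0 < γ)
    (hγ : γ < omega1) (hf : ∀ ξ < γ, f ξ < omega1) : sSup (f '' Set.Iio γ) < omega1 := by
  obtain ⟨s, hs⟩ := exists_seq h0 hγ
  have : f '' Set.Iio γ = Set.range (f ∘ s) := by rw [hs, Set.range_comp]
  rw [this, sSup_range]
  exact iSup_lt_omega1 _ fun n => hf _ (by rw [← Set.mem_Iio, hs]; exact ⟨n, rfl⟩)



lemma isClubIn_Ioo {β : Ordinal} (hβ : β < omega1) : IsClubIn (Set.Ioo β omega1) omega1 := by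
  refine ⟨fun x hx => hx.2, fun α hα h0 h => ?_, fun α hα => ?_⟩
  · obtain ⟨γ, hγC, _, hγα⟩ := h 0 h0
    exact ⟨hγC.1.trans hγα, hα⟩
  · exact ⟨max α β + 1, ⟨lt_of_le_of_lt (le_max_right _ _) (lt_add_one _),
      omega1_isLimit.succ_lt (max_lt hα hβ)⟩, lt_of_le_of_lt (le_max_left _ _) (lt_add_one _)⟩

lemma stat_exists_gt {S : Set Ordinal} (hS : IsStatIn S omega1) {β : Ordinal} (hβ : β < omega1) :
    ∃ x ∈ S, β < x ∧ x < omega1 := by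
  obtain ⟨x, hxS, hx⟩ := hS _ (isClubIn_Ioo hβ)
  exact ⟨x, hxS, hx.1, hx.2⟩

lemma closure_club (F : Ordinal → Ordinal) (hF : ∀ x < omega1, F x < omega1)
    {β : Ordinal} (hβ : β < omega1) :
    IsClubIn {δ | β < δ ∧ δ < omega1 ∧ Order.IsSuccLimit δ ∧ ∀ x < δ, F x < δ} omega1 := by
  refine ⟨fun x hx => hx.2.1, ?_, ?_⟩
  · rintro α hα h0 h
    have hlim : Order.IsSuccLimit α := by
      refine Ordinal.isSuccLimit_iff.2 ⟨h0.ne', Order.isSuccPrelimit_iff_succ_lt.2 fun y hy => ?_⟩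
      obtain ⟨γ, _, hyγ, hγα⟩ := h y hy
      exact lt_of_le_of_lt (Order.succ_le_of_lt hyγ) hγα
    obtain ⟨γ0, hγ0, _, hγ0α⟩ := h 0 h0
    refine ⟨hγ0.1.trans hγ0α, hα, hlim, fun x hx => ?_⟩
    obtain ⟨γ, hγC, hxγ, hγα⟩ := h x hx
    exact lt_trans (hγC.2.2.2 x hxγ) hγα
  · intro a ha
    -- iterate: g 0 = max a β + 1, g (n+1) = (max (g n) (sSup (F '' Set.Iio (g n)))) + 1
    set g : ℕ → Ordinal := fun n => Nat.rec (max a β + 1)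
      (fun _ gn => max gn (sSup (F '' Set.Iio gn)) + 1) n with hg
    have hg0 : g 0 = max a β + 1 := rfl
    have hgs : ∀ n, g (n+1) = max (g n) (sSup (F '' Set.Iio (g n))) + 1 := fun n => rfl
    have hglt : ∀ n, g n < omega1 ∧ 0 < g n := by
      intro n; induction n with
      | zero => exact ⟨omega1_isLimit.succ_lt (max_lt ha hβ), Ordinal.succ_pos _⟩
      | succ n ih =>
        rw [hgs]
        exact ⟨omega1_isLimit.succ_lt (max_lt ih.1 (sSup_image_lt ih.2 ih.1
          (fun x hx => hF x (hx.trans ih.1)))), Ordinal.succ_pos _⟩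
    have hmono : ∀ n, g n < g (n+1) := fun n => by
      rw [hgs]; exact lt_of_le_of_lt (le_max_left _ _) (lt_add_one _)
    set δ := iSup g with hδ
    have hle : ∀ n, g n ≤ δ := fun n => le_ciSup Ordinal.bddAbove_of_small n
    have hlt : ∀ {y}, y < δ → ∃ n, y < g n := by
      intro y hy
      by_contra hc
      push_neg at hc
      exact absurd (ciSup_le hc) (not_le_of_gt hy)
    have hδω : δ < omega1 := iSup_lt_omega1 _ (fun n => (hglt n).1)
    have hδlim : Order.IsSuccLimit δ := by
      refine Ordinal.isSuccLimit_iff.2 ⟨?_, Order.isSuccPrelimit_iff_succ_lt.2 fun y hy => ?_⟩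
      · intro h0
        exact absurd (h0 ▸ hle 0) (not_le_of_gt (hglt 0).2)
      · obtain ⟨n, hn⟩ := hlt hy
        exact lt_of_le_of_lt (Order.succ_le_of_lt hn) (lt_of_lt_of_le (hmono n) (hle (n+1)))
    refine ⟨δ, ⟨?_, hδω, hδlim, ?_⟩, ?_⟩
    · exact lt_of_lt_of_le (lt_of_le_of_lt (le_max_right a β) (lt_add_one _)) (hg0 ▸ hle 0)
    · intro x hx
      obtain ⟨n, hn⟩ := hlt hx
      have : F x ≤ sSup (F '' Set.Iio (g n)) :=
        le_csSup Ordinal.bddAbove_of_small ⟨x, hn, rfl⟩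
      calc F x ≤ sSup (F '' Set.Iio (g n)) := this
        _ ≤ max (g n) (sSup (F '' Set.Iio (g n))) := le_max_right _ _
        _ < g (n+1) := by rw [hgs]; exact lt_add_one _
        _ ≤ δ := hle (n+1)
    · exact lt_of_lt_of_le (lt_of_le_of_lt (le_max_left a β) (lt_add_one _)) (hg0 ▸ hle 0)

lemma bddAbove_image_Iio {f : Ordinal.{u} → Ordinal.{v}} {γ : Ordinal.{u}}
    (hγ : γ < omega1) : BddAbove (f '' Set.Iio γ) := by
  rcases eq_zero_or_pos γ with rfl | h0
  · have h : Set.Iio (0:Ordinal) = ∅ :=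
      Set.eq_empty_iff_forall_notMem.2 (fun x hx => (show (0:Ordinal) ≤ x from zero_le).not_gt hx)
    rw [h, Set.image_empty]
    exact bddAbove_empty
  · obtain ⟨s, hs⟩ := exists_seq h0 hγ
    rw [hs, ← Set.range_comp]
    exact Ordinal.bddAbove_range.{0, v} (f ∘ s)


section Main

variable (A : Ordinal.{u} → Set Ordinal.{v})

/-- Abbreviation for "good" functions. -/
def Good (t : Ordinal.{w} → Ordinal.{u}) (α : Ordinal.{w}) (β : Ordinal.{v})
    (f : Ordinal.{w} → Ordinal.{v}) : Prop :=
  IsNormalOn f α ∧ β < f 0 ∧ ∀ ξ < α, f ξ ∈ A (t ξ)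

lemma limit_case (hA : ∀ i < omega1, A i ⊆ Set.Iio omega1 ∧ IsStatIn (A i) omega1)
    (γ : Ordinal.{w}) (hγl : Order.IsSuccLimit γ) (hγ : γ < omega1)
    (IH : ∀ ρ, ρ < γ → 0 < ρ → ∀ t : Ordinal.{w} → Ordinal.{u}, (∀ ξ < ρ, t ξ < omega1) →
      ∀ β' : Ordinal.{v}, β' < omega1 → ∃ f, Good A t ρ β' f)
    (t : Ordinal.{w} → Ordinal.{u}) (ht : ∀ ξ < γ, t ξ < omega1)
    (β : Ordinal.{v}) (hβ : β < omega1) :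
    ∃ C, IsClubIn C omega1 ∧ ∀ δ ∈ C,
      ∃ f, Good A t γ β f ∧ sSup (f '' Set.Iio γ) = δ := by
  classical
  -- cofinal sequence in γ with successor values
  obtain ⟨s, hs⟩ := exists_seq hγl.pos hγ
  have hsval : ∀ n, s n < γ := fun n => by rw [← Set.mem_Iio, hs]; exact ⟨n, rfl⟩
  set e : ℕ → Ordinal := fun n => Nat.rec 0 (fun k ek => max ek (s k) + 1) n with he
  have he0 : e 0 = 0 := rfl
  have hes : ∀ n, e (n+1) = max (e n) (s n) + 1 := fun n => rfl
  have heγ : ∀ n, e n < γ := by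
    intro n; induction n with
    | zero => exact hγl.pos
    | succ n ih => rw [hes]; exact hγl.succ_lt (max_lt ih (hsval n))
  have hemono : StrictMono e := strictMono_nat_of_lt_succ fun n => by
    rw [hes]; exact lt_of_le_of_lt (le_max_left _ _) (lt_add_one _)
  have hecof : ∀ x, x < γ → ∃ n, x < e (n+1) := by
    intro x hx
    obtain ⟨n, rfl⟩ : x ∈ Set.range s := by rw [← hs]; exact hx
    exact ⟨n, (hes n) ▸ ((le_max_right (e n) (s n)).trans_lt (lt_add_one _))⟩
  set L : ℕ → Ordinal := fun n => e (n+1) - e n with hLdef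
  have heL : ∀ n, e n + L n = e (n+1) := fun n =>
    Ordinal.add_sub_cancel_of_le (hemono (Nat.lt_succ_self n)).le
  have hL0 : ∀ n, 0 < L n := by
    intro n
    rcases eq_zero_or_pos (L n) with h | h
    · have h2 := heL n
      rw [h, add_zero] at h2
      exact absurd h2 (ne_of_lt (hemono (Nat.lt_succ_self n)))
    · exact h
  have hLγ : ∀ n, L n < γ := fun n =>
    lt_of_le_of_lt ((le_add_self).trans (le_of_eq (heL n))) (heγ (n+1))
  have hLω : ∀ n, L n < omega1 := fun n => (hLγ n).trans hγ
  have htn : ∀ n ξ, ξ < L n → e n + ξ < γ := by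
    intro n ξ hξ
    calc e n + ξ < e n + L n := (add_lt_add_iff_left _).2 hξ
      _ = e (n+1) := heL n
      _ < γ := heγ (n+1)
  have hNspec : ∀ x (hx : x < γ),
      e (Nat.find (hecof x hx)) ≤ x ∧ x < e (Nat.find (hecof x hx) + 1) := by
    intro x hx
    refine ⟨?_, Nat.find_spec (hecof x hx)⟩
    rcases Nat.eq_zero_or_pos (Nat.find (hecof x hx)) with h | h
    · rw [h, he0]; exact zero_le
    · have h2 := Nat.find_min (hecof x hx) (Nat.sub_lt h Nat.one_pos)
      rw [Nat.sub_add_cancel h] at h2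
      exact not_lt.1 h2
  have hNuniq : ∀ x (hx : x < γ) m, e m ≤ x → x < e (m+1) → Nat.find (hecof x hx) = m := by
    intro x hx m h1 h2
    have hle : Nat.find (hecof x hx) ≤ m := Nat.find_min' _ h2
    rcases eq_or_lt_of_le hle with h | h
    · exact h
    · have h3 : x < e m := (hNspec x hx).2.trans_le (hemono.monotone (Nat.succ_le_of_lt h))
      exact absurd h1 (not_le_of_gt h3)
  -- choose pieces
  have hpiece : ∀ (n : ℕ) (x : Ordinal), ∃ f, x < omega1 →
      Good A (fun ξ => t (e n + ξ)) (L n) x f := by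
    intro n x
    by_cases hx : x < omega1
    · obtain ⟨f, hf⟩ := IH (L n) (hLγ n) (hL0 n) (fun ξ => t (e n + ξ))
        (fun ξ hξ => ht _ (htn n ξ hξ)) x hx
      exact ⟨f, fun _ => hf⟩
    · exact ⟨fun _ => 0, fun h => absurd h hx⟩
  choose G hG using hpiece
  have hGval : ∀ n x, x < omega1 → ∀ ξ, ξ < L n → G n x ξ < omega1 := by
    intro n x hx ξ hξ
    exact Set.mem_Iio.1 ((hA _ (ht _ (htn n ξ hξ))).1 ((hG n x hx).2.2 ξ hξ))
  set F : Ordinal → Ordinal := fun x =>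
    max (x + 1) (iSup fun n => sSup (G n x '' Set.Iio (L n)) + 1) with hFdef
  have hFω : ∀ x, x < omega1 → F x < omega1 := by
    intro x hx
    apply max_lt
    · rw [Ordinal.add_one_eq_succ]; exact omega1_isLimit.succ_lt hx
    · apply iSup_lt_omega1
      intro n
      rw [Ordinal.add_one_eq_succ]
      exact omega1_isLimit.succ_lt
        (sSup_image_lt (hL0 n) (hLω n) (fun ξ hξ => hGval n x hx ξ hξ))
  have hFgt : ∀ x, x < F x := fun x => lt_of_lt_of_le (lt_add_one x) (le_max_left _ _)
  have hFsup : ∀ n x, sSup (G n x '' Set.Iio (L n)) < F x := by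
    intro n x
    calc sSup (G n x '' Set.Iio (L n)) < sSup (G n x '' Set.Iio (L n)) + 1 := lt_add_one _
      _ ≤ iSup fun k => sSup (G k x '' Set.Iio (L k)) + 1 :=
          le_ciSup Ordinal.bddAbove_of_small n
      _ ≤ F x := le_max_right _ _
  refine ⟨{δ | β < δ ∧ δ < omega1 ∧ Order.IsSuccLimit δ ∧ ∀ x < δ, F x < δ},
    closure_club F hFω hβ, ?_⟩
  rintro δ ⟨hβδ, hδω, hδlim, hδcl⟩
  obtain ⟨d, hd⟩ := exists_seq hδlim.pos hδω
  have hdval : ∀ n, d n < δ := fun n => by rw [← Set.mem_Iio, hd]; exact ⟨n, rfl⟩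
  set b : ℕ → Ordinal := fun n =>
    Nat.rec (max β (d 0)) (fun k bk => max (F bk) (d (k+1))) n with hbdef
  have hb0 : b 0 = max β (d 0) := rfl
  have hbs : ∀ n, b (n+1) = max (F (b n)) (d (n+1)) := fun n => rfl
  have hbδ : ∀ n, b n < δ := by
    intro n; induction n with
    | zero => exact max_lt hβδ (hdval 0)
    | succ n ih => rw [hbs]; exact max_lt (hδcl _ ih) (hdval _)
  have hbω : ∀ n, b n < omega1 := fun n => (hbδ n).trans hδω
  have hbd : ∀ n, d n ≤ b n := by
    intro n; cases n with
    | zero => exact le_max_right _ _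
    | succ n => rw [hbs]; exact le_max_right _ _
  have hbmono : ∀ n, b n < b (n+1) := fun n => by
    rw [hbs]; exact lt_of_lt_of_le (hFgt (b n)) (le_max_left _ _)
  have hble : Monotone b := monotone_nat_of_le_succ (fun n => (hbmono n).le)
  have hvb : ∀ n ξ, ξ < L n → G n (b n) ξ < b (n+1) := by
    intro n ξ hξ
    have h1 : G n (b n) ξ ≤ sSup (G n (b n) '' Set.Iio (L n)) :=
      le_csSup (bddAbove_image_Iio (hLω n)) ⟨ξ, hξ, rfl⟩
    rw [hbs]
    exact lt_of_le_of_lt h1 (lt_of_lt_of_le (hFsup n (b n)) (le_max_left _ _))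
  have hvδ : ∀ n ξ, ξ < L n → G n (b n) ξ < δ := fun n ξ hξ =>
    (hvb n ξ hξ).trans (hbδ (n+1))
  have hcross : ∀ m k, m < k → ∀ ξ η, ξ < L m → η < L k →
      G m (b m) ξ < G k (b k) η := by
    intro m k hmk ξ η hξ hη
    have h1 : G m (b m) ξ < b (m+1) := hvb m ξ hξ
    have h2 : b (m+1) ≤ b k := hble hmk
    have h3 : b k < G k (b k) 0 := (hG k (b k) (hbω k)).2.1
    have h4 : G k (b k) 0 ≤ G k (b k) η := by
      rcases eq_zero_or_pos η with rfl | h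
      · exact le_rfl
      · exact ((hG k (b k) (hbω k)).1.1 0 η h hη).le
    exact lt_of_lt_of_le (lt_of_lt_of_le (lt_of_lt_of_le h1 h2) h3.le) h4
  -- the glued function
  set f : Ordinal → Ordinal := fun x =>
    if hx : x < γ then G (Nat.find (hecof x hx)) (b (Nat.find (hecof x hx)))
      (x - e (Nat.find (hecof x hx))) else 0 with hfdef
  have hfval : ∀ m x (hx : x < γ), e m ≤ x → x < e (m+1) → f x = G m (b m) (x - e m) := by
    intro m x hx h1 h2
    rw [hfdef]
    simp only [dif_pos hx, hNuniq x hx m h1 h2]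
  have hsubL : ∀ m x, e m ≤ x → x < e (m+1) → x - e m < L m := by
    intro m x h1 h2
    rw [Ordinal.sub_lt_of_le h1, heL m]
    exact h2
  have hmemseg : ∀ x, x < γ → ∃ m, e m ≤ x ∧ x < e (m+1) := fun x hx =>
    ⟨Nat.find (hecof x hx), hNspec x hx⟩
  have hfmono : ∀ x y, x < y → y < γ → f x < f y := by
    intro x y hxy hy
    have hx : x < γ := hxy.trans hy
    obtain ⟨m, hm1, hm2⟩ := hmemseg x hx
    obtain ⟨k, hk1, hk2⟩ := hmemseg y hy
    rw [hfval m x hx hm1 hm2, hfval k y hy hk1 hk2]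
    have hmk : m ≤ k := by
      by_contra h
      push_neg at h
      have h3 : y < e m := hk2.trans_le (hemono.monotone (Nat.succ_le_of_lt h))
      exact absurd (hm1.trans hxy.le) (not_le_of_gt h3)
    rcases eq_or_lt_of_le hmk with rfl | h
    · refine (hG m (b m) (hbω m)).1.1 _ _ ?_ (hsubL m y hk1 hk2)
      rw [Ordinal.sub_lt_of_le hm1, Ordinal.add_sub_cancel_of_le hk1]
      exact hxy
    · exact hcross m k h _ _ (hsubL m x hm1 hm2) (hsubL k y hk1 hk2)
  have hf0 : f 0 = G 0 (b 0) 0 := by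
    have h2 : (0:Ordinal) < e 1 := he0 ▸ hemono Nat.zero_lt_one
    rw [hfval 0 0 hγl.pos he0.le h2, he0, Ordinal.sub_zero]
  have hfβ : β < f 0 := by
    rw [hf0]
    exact lt_of_le_of_lt (hb0 ▸ le_max_left β (d 0)) (hG 0 (b 0) (hbω 0)).2.1
  have hfmem : ∀ x, x < γ → f x ∈ A (t x) := by
    intro x hx
    obtain ⟨m, h1, h2⟩ := hmemseg x hx
    rw [hfval m x hx h1 h2]
    have h3 := (hG m (b m) (hbω m)).2.2 (x - e m) (hsubL m x h1 h2)
    simpa only [Ordinal.add_sub_cancel_of_le h1] using h3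
  have hfcont : ∀ l, l < γ → Order.IsSuccLimit l → f l = sSup (f '' Set.Iio l) := by
    intro l hl hllim
    obtain ⟨m, h1, h2⟩ := hmemseg l hl
    have hml : e m < l := by
      rcases eq_or_lt_of_le h1 with h | h
      · exfalso
        cases m with
        | zero => exact hllim.ne_zero (by rw [← h, he0])
        | succ k =>
          have h4 : l = Order.succ (max (e k) (s k)) := by
            rw [← h, hes, Ordinal.add_one_eq_succ]
          exact Order.not_isSuccLimit_succ _ (h4 ▸ hllim)
      · exact h
    have hξl : e m + (l - e m) = l := Ordinal.add_sub_cancel_of_le h1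
    have hξlL : l - e m < L m := hsubL m l h1 h2
    have hξlim : Order.IsSuccLimit (l - e m) := by
      rcases Ordinal.zero_or_succ_or_isSuccLimit (l - e m) with h0 | ⟨a, ha⟩ | hlim
      · rw [h0, add_zero] at hξl
        exact absurd hξl (ne_of_lt hml)
      · exfalso
        rw [← ha, Ordinal.add_succ] at hξl
        exact Order.not_isSuccLimit_succ _ (hξl ▸ hllim)
      · exact hlim
    have hξpos : 0 < l - e m := hξlim.pos
    rw [hfval m l hl h1 h2, (hG m (b m) (hbω m)).1.2 (l - e m) hξlL hξlim]
    apply le_antisymm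
    · apply csSup_le_csSup (bddAbove_image_Iio (hl.trans hγ))
        ((show (G m (b m) '' Set.Iio (l - e m)).Nonempty from ⟨_, 0, hξpos, rfl⟩))
      rintro _ ⟨η, hη, rfl⟩
      have hη1 : e m + η < l := by
        rw [← hξl]
        exact (add_lt_add_iff_left _).2 hη
      refine ⟨e m + η, hη1, ?_⟩
      rw [hfval m (e m + η) (hη1.trans hl) le_self_add (hη1.trans h2),
        Ordinal.add_sub_cancel]
    · apply csSup_le ((show (f '' Set.Iio l).Nonempty from ⟨_, 0, hllim.pos, rfl⟩))
      rintro _ ⟨x, hxl, rfl⟩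
      obtain ⟨k, hk1, hk2⟩ := hmemseg x (hxl.trans hl)
      rw [hfval k x (hxl.trans hl) hk1 hk2]
      have hkm : k ≤ m := by
        by_contra h
        push_neg at h
        have h3 : x < e k := (hxl.trans h2).trans_le (hemono.monotone (Nat.succ_le_of_lt h))
        exact absurd hk1 (not_le_of_gt h3)
      rcases eq_or_lt_of_le hkm with rfl | h
      · apply le_csSup (bddAbove_image_Iio ((hξlL.trans (hLγ k)).trans hγ))
        refine ⟨x - e k, ?_, rfl⟩
        show x - e k < l - e k
        rw [Ordinal.sub_lt_of_le hk1, hξl]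
        exact hxl
      · refine le_trans (hcross k m h _ 0 (hsubL k x hk1 hk2) (hL0 m)).le ?_
        exact le_csSup (bddAbove_image_Iio ((hξlL.trans (hLγ m)).trans hγ)) ⟨0, hξpos, rfl⟩
  have hsup : sSup (f '' Set.Iio γ) = δ := by
    apply le_antisymm
    · apply csSup_le ((show (f '' Set.Iio γ).Nonempty from ⟨_, 0, hγl.pos, rfl⟩))
      rintro _ ⟨x, hx, rfl⟩
      obtain ⟨m, h1, h2⟩ := hmemseg x hx
      rw [hfval m x hx h1 h2]
      exact (hvδ m _ (hsubL m x h1 h2)).le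
    · refine hδlim.le_iff_forall_le.2 (fun y hy => ?_)
      obtain ⟨n, rfl⟩ : y ∈ Set.range d := by rw [← hd]; exact hy
      have hfe : f (e n) = G n (b n) 0 := by
        rw [hfval n (e n) (heγ n) le_rfl (hemono (Nat.lt_succ_self n)), Ordinal.sub_self]
      calc d n ≤ b n := hbd n
        _ ≤ G n (b n) 0 := ((hG n (b n) (hbω n)).2.1).le
        _ = f (e n) := hfe.symm
        _ ≤ sSup (f '' Set.Iio γ) := le_csSup (bddAbove_image_Iio hγ) ⟨e n, heγ n, rfl⟩
  exact ⟨f, ⟨⟨hfmono, hfcont⟩, hfβ, hfmem⟩, hsup⟩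

lemma extend (γ : Ordinal.{w}) (hγ0 : 0 < γ) (f : Ordinal.{w} → Ordinal.{v})
    (t : Ordinal.{w} → Ordinal.{u}) (β c : Ordinal.{v})
    (hfn : IsNormalOn f γ) (hfβ : β < f 0) (hfm : ∀ ξ < γ, f ξ ∈ A (t ξ))
    (hcA : c ∈ A (t γ)) (hc : ∀ ξ < γ, f ξ < c)
    (hcont : Order.IsSuccLimit γ → c = sSup (f '' Set.Iio γ)) :
    ∃ g, Good A t (Order.succ γ) β g := by
  have him : ∀ l, l ≤ γ →
      (fun x => if x = γ then c else f x) '' Set.Iio l = f '' Set.Iio l := by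
    intro l hl
    apply Set.image_congr
    intro x hx
    simp only [if_neg (ne_of_lt (lt_of_lt_of_le hx hl))]
  refine ⟨fun x => if x = γ then c else f x, ⟨?_, ?_⟩, ?_, ?_⟩
  · intro ξ η hξη hη
    rw [Order.lt_succ_iff] at hη
    rcases eq_or_lt_of_le hη with rfl | hη'
    · simp only [if_pos rfl, if_neg (ne_of_lt hξη)]
      exact hc ξ hξη
    · simp only [if_neg (ne_of_lt hη'), if_neg (ne_of_lt (hξη.trans hη'))]
      exact hfn.1 ξ η hξη hη'
  · intro l hl hllim
    rw [Order.lt_succ_iff] at hl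
    rcases eq_or_lt_of_le hl with rfl | hl'
    · rw [him l le_rfl, ← hcont hllim]
      simp
    · simp only [if_neg (ne_of_lt hl')]
      rw [him l hl'.le]
      exact hfn.2 l hl' hllim
  · simp only [if_neg (ne_of_lt hγ0)]
    exact hfβ
  · intro ξ hξ
    rw [Order.lt_succ_iff] at hξ
    rcases eq_or_lt_of_le hξ with rfl | hξ'
    · simp only [if_pos rfl]; exact hcA
    · simp only [if_neg (ne_of_lt hξ')]; exact hfm ξ hξ'

lemma key (hA : ∀ i < omega1, A i ⊆ Set.Iio omega1 ∧ IsStatIn (A i) omega1) :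
    ∀ α : Ordinal.{w}, 0 < α → α < omega1 → ∀ t : Ordinal.{w} → Ordinal.{u},
      (∀ ξ < α, t ξ < omega1) → ∀ β : Ordinal.{v}, β < omega1 → ∃ f, Good A t α β f := by
  intro α
  induction α using Ordinal.induction with
  | h α IH =>
  intro hα0 hα t ht β hβ
  rcases Ordinal.zero_or_succ_or_isSuccLimit α with rfl | ⟨γ, rfl⟩ | hlim
  · exact absurd hα0 (lt_irrefl 0)
  · -- α = succ γ
    have hγω : γ < omega1 := (Order.lt_succ γ).trans hα
    have htγ : t γ < omega1 := ht γ (Order.lt_succ γ)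
    rcases Ordinal.zero_or_succ_or_isSuccLimit γ with rfl | ⟨γ', rfl⟩ | hγlim
    · -- α = 1
      obtain ⟨c, hcA, hc1, _⟩ := stat_exists_gt (hA (t 0) (ht 0 (Order.lt_succ 0))).2 hβ
      refine ⟨fun _ => c, ⟨?_, ?_⟩, hc1, ?_⟩
      · intro ξ η hξη hη
        rw [Order.lt_succ_iff, nonpos_iff_eq_zero] at hη
        exact absurd (hη ▸ hξη) (show ¬ ξ < (0:Ordinal) from fun h => (zero_le : (0:Ordinal) ≤ ξ).not_gt h)
      · intro l hl hllim
        rw [Order.lt_succ_iff, nonpos_iff_eq_zero] at hl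
        exact absurd (hl ▸ hllim) Ordinal.not_isSuccLimit_zero
      · intro ξ hξ
        rw [Order.lt_succ_iff, nonpos_iff_eq_zero] at hξ
        rw [hξ]
        exact hcA
    · -- α = succ (succ γ')
      obtain ⟨f, hfn, hfβ, hfm⟩ := IH (Order.succ γ') (Order.lt_succ _)
        (Order.lt_succ_iff.2 (zero_le)) hγω t (fun ξ hξ => ht ξ (hξ.trans (Order.lt_succ _))) β hβ
      have hσ : sSup (f '' Set.Iio (Order.succ γ')) < omega1 :=
        sSup_image_lt (Order.lt_succ_iff.2 (zero_le)) hγω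
          (fun ξ hξ => Set.mem_Iio.1
            ((hA (t ξ) (ht ξ (hξ.trans (Order.lt_succ _)))).1 (hfm ξ hξ)))
      obtain ⟨c, hcA, hc1, _⟩ := stat_exists_gt (hA (t (Order.succ γ')) htγ).2 hσ
      refine extend A (Order.succ γ') (Order.lt_succ_iff.2 (zero_le)) f t β c hfn hfβ hfm hcA ?_ ?_
      · intro ξ hξ
        exact lt_of_le_of_lt (le_csSup (bddAbove_image_Iio hγω) (show f ξ ∈ f '' Set.Iio (Order.succ γ') from ⟨ξ, hξ, rfl⟩)) hc1
      · intro h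
        exact absurd h (Order.not_isSuccLimit_succ γ')
    · -- α = succ γ, γ limit
      obtain ⟨C, hC, hCspec⟩ := limit_case A hA γ hγlim hγω
        (fun ρ hρ h0 t' ht' β' hβ' => IH ρ (hρ.trans (Order.lt_succ γ)) h0 (hρ.trans hγω) t' ht' β' hβ')
        t (fun ξ hξ => ht ξ (hξ.trans (Order.lt_succ γ))) β hβ
      obtain ⟨δ, hδA, hδC⟩ := (hA (t γ) htγ).2 C hC
      obtain ⟨f, ⟨hfn, hfβ, hfm⟩, hsup⟩ := hCspec δ hδC
      refine extend A γ hγlim.pos f t β δ hfn hfβ hfm hδA ?_ (fun _ => hsup.symm)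
      intro ξ hξ
      calc f ξ < f (Order.succ ξ) := hfn.1 ξ _ (Order.lt_succ ξ) (hγlim.succ_lt hξ)
        _ ≤ sSup (f '' Set.Iio γ) :=
            le_csSup (bddAbove_image_Iio hγω) ⟨Order.succ ξ, hγlim.succ_lt hξ, rfl⟩
        _ = δ := hsup
  · -- α limit
    obtain ⟨C, hC, hCspec⟩ := limit_case A hA α hlim hα
      (fun ρ hρ h0 t' ht' β' hβ' => IH ρ hρ h0 (hρ.trans hα) t' ht' β' hβ')
      t ht β hβ
    obtain ⟨δ, hδC, _⟩ := hC.2.2 0 omega1_isLimit.pos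
    obtain ⟨f, hf, _⟩ := hCspec δ hδC
    exact ⟨f, hf⟩

end Main

theorem stmt0 (A : Ordinal → Set Ordinal)
    (hA : ∀ i < omega1, A i ⊆ Set.Iio omega1 ∧ IsStatIn (A i) omega1)
    (t : Ordinal → Ordinal) (ht : ∀ ξ < omega1, t ξ < omega1)
    (β α : Ordinal) (hβ : β < omega1) (hα0 : 0 < α) (hα : α < omega1) :
    ∃ f : Ordinal → Ordinal, IsNormalOn f α ∧ β < f 0 ∧
      ∀ ξ < α, f ξ ∈ A (t ξ) := by
  obtain ⟨f, hf1, hf2, hf3⟩ := key A hA α hα0 hα t (fun ξ hξ => ht ξ (hξ.trans hα)) β hβ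
  exact ⟨f, hf1, hf2, hf3⟩
end
end

section
/- Let ⟨T_i : i < ω₁⟩ be a sequence of pairwise disjoint stationary subsets of ω₁ and let D = ⋃_{i<ω₁} T_i. The following are equivalent: (1) the set D \ ∇_{i<ω₁} T_i is nonstationary in ω₁; (2) for every stationary A ⊆ D, there exists i < ω₁ such that A ∩ T_i is stationary. -/
noncomputable section
open Set Ordinal Cardinal

namespace Stmt5Aux

lemma omega1_isLimit : Order.IsSuccLimit omega1 :=
  Cardinal.isSuccLimit_ord (Cardinal.aleph0_le_aleph 1)

lemma succ_lt_omega1 {α : Ordinal} (h : α < omega1) : α + 1 < omega1 := by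
  rw [Ordinal.add_one_eq_succ]
  exact omega1_isLimit.succ_lt h

universe u v

lemma iSup_lt_omega1 {ι : Type v} (f : ι → Ordinal.{max v u})
    (hι : Cardinal.lift.{u} #ι < Cardinal.aleph 1)
    (hf : ∀ x, f x < omega1) : (⨆ x, f x) < omega1 :=
  Cardinal.iSup_lt_ord_lift_of_isRegular Cardinal.isRegular_aleph_one hι hf

lemma exists_next {C : Set Ordinal} (hC : IsClubIn C omega1) :
    ∃ g : Ordinal → Ordinal, ∀ β < omega1, g β ∈ C ∧ β < g β := by
  classical
  choose g hg using fun β (h : β < omega1) => hC.2.2 β h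
  refine ⟨fun β => if h : β < omega1 then g β h else 0, fun β hβ => ?_⟩
  simp only [dif_pos hβ]
  exact ⟨(hg β hβ).1, (hg β hβ).2⟩

/-- The interval `(i, ω₁)` is a club in `ω₁`. -/
lemma ioo_club {i : Ordinal} (hi : i < omega1) :
    IsClubIn {β | i < β ∧ β < omega1} omega1 := by
  refine ⟨fun β hβ => hβ.2, ?_, ?_⟩
  · intro α hα h0 h
    obtain ⟨γ, hγ, -, hγα⟩ := h 0 h0
    exact ⟨lt_trans hγ.1 hγα, hα⟩
  · intro α hα
    exact ⟨max α i + 1, ⟨lt_of_le_of_lt (le_max_right α i) (lt_add_one _),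
      succ_lt_omega1 (max_lt hα hi)⟩, lt_of_le_of_lt (le_max_left α i) (lt_add_one _)⟩

/-- The diagonal intersection of a family of clubs, intersected with one more club,
is a club in `ω₁`. -/
lemma diag_club (C₀ : Set Ordinal) (h₀ : IsClubIn C₀ omega1)
    (G : Ordinal → Set Ordinal) (hG : ∀ i < omega1, IsClubIn (G i) omega1) :
    IsClubIn (C₀ ∩ {α | 0 < α ∧ ∀ i < α, α ∈ G i}) omega1 := by
  classical
  refine ⟨fun β hβ => h₀.1 hβ.1, ?_, ?_⟩
  · -- closedness
    intro α hα h0 h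
    refine ⟨?_, h0, ?_⟩
    · exact h₀.2.1 α hα h0 (fun β hβ => by
        obtain ⟨γ, hγ, h1, h2⟩ := h β hβ
        exact ⟨γ, hγ.1, h1, h2⟩)
    · intro i hiα
      refine (hG i (lt_trans hiα hα)).2.1 α hα h0 (fun β hβ => ?_)
      obtain ⟨γ, hγ, h1, h2⟩ := h (max β i) (max_lt hβ hiα)
      exact ⟨γ, hγ.2.2 i (lt_of_le_of_lt (le_max_right β i) h1), 
        lt_of_le_of_lt (le_max_left β i) h1, h2⟩
  · -- unboundedness
    intro α hα
    obtain ⟨n₀, hn₀⟩ := exists_next h₀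
    have hch : ∀ i, ∃ g : Ordinal → Ordinal,
        i < omega1 → ∀ β < omega1, g β ∈ G i ∧ β < g β := by
      intro i
      by_cases h : i < omega1
      · obtain ⟨g, hg⟩ := exists_next (hG i h)
        exact ⟨g, fun _ => hg⟩
      · exact ⟨id, fun h' => absurd h' h⟩
    choose nG hnG using hch
    -- the step function
    set step : Ordinal → Ordinal := fun β =>
      (β + 1) ⊔ (n₀ β) ⊔ ⨆ x : β.ToType, nG ((ToType.mk (o := β)).symm x : Set.Iio β) β with hstep
    have hstep_lt : ∀ β < omega1, step β < omega1 := by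
      intro β hβ
      refine max_lt (max_lt (succ_lt_omega1 hβ) (h₀.1 (hn₀ β hβ).1)) ?_
      refine iSup_lt_omega1
        (fun x : β.ToType => nG ((ToType.mk (o := β)).symm x : Set.Iio β) β) ?_ ?_
      · rw [Cardinal.mk_toType, Cardinal.lift_id]
        exact (Cardinal.lt_ord).1 hβ
      · intro x
        have hix : ((((ToType.mk (o := β)).symm x) : Set.Iio β) : Ordinal) < omega1 :=
          lt_trans ((ToType.mk (o := β)).symm x).2 hβ
        exact (hG _ hix).1 (hnG _ hix β hβ).1
    have hstep_gt : ∀ β, β < step β := fun β =>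
      lt_of_lt_of_le (lt_add_one β) (le_trans (le_max_left _ _) (le_max_left _ _))
    have hstep_n₀ : ∀ β, n₀ β ≤ step β := fun β =>
      le_trans (le_max_right _ _) (le_max_left _ _)
    have hstep_nG : ∀ β, ∀ i < β, nG i β ≤ step β := by
      intro β i hi
      have := Ordinal.le_iSup
        (fun x : β.ToType => nG ((ToType.mk (o := β)).symm x : Set.Iio β) β)
        (ToType.mk (o := β) ⟨i, hi⟩)
      simp only [OrderIso.symm_apply_apply] at this
      exact le_trans this (le_max_right _ _)
    -- the ω-sequence
    set f : ℕ → Ordinal := fun n => Nat.rec α (fun _ ih => step ih) n with hf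
    have hf0 : f 0 = α := rfl
    have hfs : ∀ n, f (n + 1) = step (f n) := fun n => rfl
    have hflt : ∀ n, f n < omega1 := by
      intro n
      induction n with
      | zero => exact hα
      | succ n ih => rw [hfs]; exact hstep_lt _ ih
    have hfmono : ∀ n, f n < f (n + 1) := fun n => by rw [hfs]; exact hstep_gt _
    have hfmono' : StrictMono f := strictMono_nat_of_lt_succ hfmono
    set δ : Ordinal := ⨆ n, f n with hδ
    have hfleδ : ∀ n, f n ≤ δ := Ordinal.le_iSup f
    have hfltδ : ∀ n, f n < δ := fun n => lt_of_lt_of_le (hfmono n) (hfleδ (n + 1))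
    have hδlt : δ < omega1 := by
      refine iSup_lt_omega1 f ?_ hflt
      rw [Cardinal.mk_nat, Cardinal.lift_aleph0]
      exact Cardinal.aleph0_lt_aleph_one
    have hαδ : α < δ := by rw [← hf0]; exact hfltδ 0
    have hlt_δ : ∀ β < δ, ∃ n, β < f n := fun β hβ => Ordinal.lt_iSup_iff.1 hβ
    have h0δ : 0 < δ := lt_of_le_of_lt (zero_le (a := α)) hαδ
    refine ⟨δ, ⟨?_, h0δ, ?_⟩, hαδ⟩
    · -- δ ∈ C₀
      refine h₀.2.1 δ hδlt h0δ (fun β hβ => ?_)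
      obtain ⟨n, hn⟩ := hlt_δ β hβ
      refine ⟨n₀ (f n), (hn₀ _ (hflt n)).1, lt_trans hn (hn₀ _ (hflt n)).2, ?_⟩
      exact lt_of_le_of_lt (le_trans (hstep_n₀ (f n)) (le_of_eq (hfs n).symm)) (hfltδ (n + 1))
    · -- ∀ i < δ, δ ∈ G i
      intro i hiδ
      have hiω : i < omega1 := lt_trans hiδ hδlt
      refine (hG i hiω).2.1 δ hδlt h0δ (fun β hβ => ?_)
      obtain ⟨n₁, hn₁⟩ := hlt_δ i hiδ
      obtain ⟨n₂, hn₂⟩ := hlt_δ β hβ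
      set m := max n₁ n₂ with hm
      have hifm : i < f m := lt_of_lt_of_le hn₁ (hfmono'.monotone (le_max_left n₁ n₂))
      have hβfm : β < f m := lt_of_lt_of_le hn₂ (hfmono'.monotone (le_max_right n₁ n₂))
      refine ⟨nG i (f m), (hnG i hiω (f m) (hflt m)).1,
        lt_trans hβfm (hnG i hiω (f m) (hflt m)).2, ?_⟩
      exact lt_of_le_of_lt (le_trans (hstep_nG (f m) i hifm) (le_of_eq (hfs m).symm))
        (hfltδ (m + 1))

end Stmt5Aux

open Stmt5Aux in
theorem stmt5 (T : Ordinal → Set Ordinal)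
    (hsub : ∀ i < omega1, T i ⊆ Set.Iio omega1)
    (hstat : ∀ i < omega1, IsStatIn (T i) omega1)
    (hdisj : ∀ i j, i < omega1 → j < omega1 → i ≠ j → Disjoint (T i) (T j))
    (D : Set Ordinal) (hD : D = ⋃ i ∈ Set.Iio omega1, T i) :
    ¬ IsStatIn (D \ {α | ∃ i < α, α ∈ T i}) omega1 ↔
      ∀ A ⊆ D, IsStatIn A omega1 → ∃ i < omega1, IsStatIn (A ∩ T i) omega1 := by
  classical
  constructor
  · -- (1) → (2)
    intro hns A hA hAstat
    rw [IsStatIn] at hns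
    push_neg at hns
    obtain ⟨C₀, h₀, hC₀⟩ := hns
    by_contra hcon
    push_neg at hcon
    have hch : ∀ i, ∃ E : Set Ordinal,
        i < omega1 → IsClubIn E omega1 ∧ (A ∩ T i) ∩ E = ∅ := by
      intro i
      by_cases h : i < omega1
      · have := hcon i h
        rw [IsStatIn] at this
        push_neg at this
        obtain ⟨E, hE1, hE2⟩ := this
        exact ⟨E, fun _ => ⟨hE1, hE2⟩⟩
      · exact ⟨∅, fun h' => absurd h' h⟩
    choose E hE using hch
    have hclub := diag_club C₀ h₀ E (fun i hi => (hE i hi).1)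
    obtain ⟨α, hαA, hαC₀, h0α, hall⟩ := hAstat _ hclub
    have hαω : α < omega1 := h₀.1 hαC₀
    have hαD : α ∈ D := hA hαA
    have hαnabla : α ∈ {α | ∃ i < α, α ∈ T i} := by
      by_contra hn
      have : α ∈ (D \ {α | ∃ i < α, α ∈ T i}) ∩ C₀ := ⟨⟨hαD, hn⟩, hαC₀⟩
      rw [hC₀] at this
      exact this
    obtain ⟨i, hiα, hαTi⟩ := hαnabla
    have hiω : i < omega1 := lt_trans hiα hαω
    have : α ∈ (A ∩ T i) ∩ E i := ⟨⟨hαA, hαTi⟩, hall i hiα⟩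
    rw [(hE i hiω).2] at this
    exact this
  · -- (2) → (1)
    intro h2 hS
    obtain ⟨i, hi, hstatAT⟩ := h2 (D \ {α | ∃ i < α, α ∈ T i}) Set.diff_subset hS
    obtain ⟨α, ⟨hαS, hαT⟩, hiα, hαω⟩ := hstatAT _ (ioo_club hi)
    exact hαS.2 ⟨i, hiα, hαT⟩
end
end
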